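/- arXiv:1903.10497 — 4 statements merged into one kernel-verified Lean document; each statement's English description precedes it below -/
import Mathlib

section
/- Let θ ∈ (0,1), α > 0, 1 < p < ∞, and w ∈ ℂ, and consider the weight μ(z) = |z - w|^{α(2-p)/θ} on the upper half plane. If p lies in the open interval ((2α + 2θ)/(α + 2θ), (2α + 2θ)/α), then μ belongs to A_p^+(𝕌), with a bound N_D(μ) ≤ C where C is independent of w and of the disk D. -/
open MeasureTheory Metric

/-- The upper half plane 𝕌 ⊆ ℂ. -/
def upperHalf : Set ℂ := {z : ℂ | 0 < z.im}

/-- The quantity N_D(μ) for the disk D = D(x,R) centered at x ∈ ℝ, with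
conjugate exponent q = p/(p-1). -/
noncomputable def ND (p : ℝ) (μ : ℂ → ℝ) (x R : ℝ) : ℝ :=
  ((1 / (Real.pi * R ^ 2)) * ∫ z in ball (x : ℂ) R ∩ upperHalf, μ z) *
    ((1 / (Real.pi * R ^ 2)) *
        ∫ z in ball (x : ℂ) R ∩ upperHalf, μ z ^ (-((p / (p - 1)) / p))) ^
      (p / (p / (p - 1)))

/-!
For `γ > -d`, integration in polar coordinates gives `∫_{B(w,r)} |x - w|^γ = c r^(d+γ)`. Hence
`∫_{B(z,R)} |x - w|^γ ≲ R^d max(R, |z - w|)^γ`: if `|z - w| ≤ 2R` the ball `B(z,R)` lies in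
`B(w,3R)`, and otherwise `|x - w|` is comparable to `|z - w|` on `B(z,R)`.
In `N_D` the weight `|z - w|^γ`, `γ = α(2-p)/θ`, is paired with `|z - w|^(-γ/(p-1))`; the
interval for `p` is exactly the condition that both exponents exceed `-2`. The two averages are
then bounded by `C M^γ` and `C M^(-γ/(p-1))` with `M = max(R, |x - w|)`, and the powers of `M`
cancel in `N_D`.
-/

open Set Module

theorem indicator_ball_comp_sub {E β : Type*} [SeminormedAddCommGroup E] [Zero β] (f : E → β)
    (w : E) (r : ℝ) :
    (ball w r).indicator (fun x => f (x - w)) = fun x => (ball 0 r).indicator f (x - w) := by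
  ext x
  simp only [indicator, mem_ball_iff_norm, sub_zero]

theorem rpow_le_two_rpow_abs_mul_rpow {a b γ : ℝ} (ha : 0 < a) (hab : a ≤ 2 * b)
    (hba : b ≤ 2 * a) : a ^ γ ≤ 2 ^ |γ| * b ^ γ := by
  have hb : 0 < b := by linarith
  rcases le_total 0 γ with hγ | hγ
  · calc a ^ γ ≤ (2 * b) ^ γ := Real.rpow_le_rpow ha.le hab hγ
      _ = 2 ^ |γ| * b ^ γ := by rw [abs_of_nonneg hγ, Real.mul_rpow (by norm_num) hb.le]
  · calc a ^ γ ≤ (b / 2) ^ γ := Real.rpow_le_rpow_of_nonpos (by positivity) (by linarith) hγ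
      _ = 2 ^ |γ| * b ^ γ := by
        rw [abs_of_nonpos hγ, Real.div_rpow hb.le (by norm_num), Real.rpow_neg (by norm_num)]
        ring

section PowerWeight

variable {E : Type*} [NormedAddCommGroup E] [NormedSpace ℝ E] [FiniteDimensional ℝ E]
  [MeasurableSpace E] [BorelSpace E] [Nontrivial E] (μ : Measure E) [μ.IsAddHaarMeasure]
  {γ : ℝ}

theorem setIntegral_ball_zero_norm_rpow (hγ : -(finrank ℝ E : ℝ) < γ) {r : ℝ} (hr : 0 ≤ r) :
    ∫ x in ball (0 : E) r, ‖x‖ ^ γ ∂μ =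
      finrank ℝ E * μ.real (ball 0 1) * (r ^ (finrank ℝ E + γ) / (finrank ℝ E + γ)) := by
  set d := finrank ℝ E
  have hd : 1 ≤ d := finrank_pos
  have hradial : ∫ y in Ioi (0 : ℝ), y ^ (d - 1) • (Iio r).indicator (· ^ γ) y =
      ∫ y in (0)..r, y ^ (d - 1 + γ) := by
    rw [intervalIntegral.integral_of_le hr, integral_Ioc_eq_integral_Ioo, ← Ioi_inter_Iio,
      ← setIntegral_indicator measurableSet_Iio]
    refine setIntegral_congr_fun measurableSet_Ioi fun y (hy : 0 < y) => ?_
    by_cases hyr : y < r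
    · simp [hyr, Real.rpow_add hy, ← Real.rpow_natCast, Nat.cast_sub hd]
    · simp [hyr]
  have hind : (ball (0 : E) r).indicator (fun x => ‖x‖ ^ γ) =
      fun x => (Iio r).indicator (· ^ γ) ‖x‖ := by
    ext x; simp [indicator]
  rw [← integral_indicator measurableSet_ball, hind, integral_fun_norm_addHaar, hradial,
    integral_rpow (Or.inl (by linarith)), Real.zero_rpow (by linarith)]
  rw [show (d : ℝ) - 1 + γ + 1 = d + γ by ring, nsmul_eq_mul, smul_eq_mul]
  ring

theorem setIntegral_ball_norm_sub_rpow (hγ : -(finrank ℝ E : ℝ) < γ) (w : E) {r : ℝ}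
    (hr : 0 ≤ r) :
    ∫ x in ball w r, ‖x - w‖ ^ γ ∂μ =
      finrank ℝ E * μ.real (ball 0 1) * (r ^ (finrank ℝ E + γ) / (finrank ℝ E + γ)) := by
  rw [← setIntegral_ball_zero_norm_rpow μ hγ hr, ← integral_indicator measurableSet_ball,
    ← integral_indicator measurableSet_ball, indicator_ball_comp_sub (‖·‖ ^ γ),
    integral_sub_right_eq_self]

theorem integrableOn_ball_norm_sub_rpow (hγ : -(finrank ℝ E : ℝ) < γ) (w z : E) (r : ℝ) :
    IntegrableOn (fun x => ‖x - w‖ ^ γ) (ball z r) μ := by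
  have h0 : IntegrableOn (‖·‖ ^ γ) (ball (0 : E) (r + dist z w)) μ :=
    integrableOn_ball_of_norm_le_rpow (C := 1) (α := -γ) finrank_pos (by linarith)
      (ae_of_all _ fun x => by simp [abs_of_nonneg (Real.rpow_nonneg (norm_nonneg x) γ)])
      (measurable_norm.pow_const γ).aestronglyMeasurable
  refine IntegrableOn.mono_set (t := ball w (r + dist z w)) ?_ (ball_subset_ball' le_rfl)
  rw [← integrable_indicator_iff measurableSet_ball] at h0 ⊢
  rw [indicator_ball_comp_sub (‖·‖ ^ γ)]
  exact h0.comp_sub_right w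

theorem addHaar_real_ball (z : E) {R : ℝ} (hR : 0 ≤ R) :
    μ.real (ball z R) = R ^ finrank ℝ E * μ.real (ball 0 1) := by
  simp [Measure.real, Measure.addHaar_ball μ z hR, ENNReal.toReal_mul, hR]

theorem exists_setIntegral_ball_norm_sub_rpow_le (hγ : -(finrank ℝ E : ℝ) < γ) :
    ∃ C > 0, ∀ (w z : E) (R : ℝ), 0 < R →
      ∫ x in ball z R, ‖x - w‖ ^ γ ∂μ ≤ C * R ^ finrank ℝ E * max R (dist z w) ^ γ := by
  set d := finrank ℝ E with hd
  set B := μ.real (ball (0 : E) 1)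
  set K := d * B / (d + γ)
  have hB : 0 < B := ENNReal.toReal_pos (measure_ball_pos μ 0 one_pos).ne' measure_ball_lt_top.ne
  have hK : 0 ≤ K := div_nonneg (by positivity) (by linarith)
  refine ⟨2 ^ |γ| * (B + K * 3 ^ (d + γ)), by positivity, fun w z R hR => ?_⟩
  set M := max R (dist z w)
  have hM : 0 < M := lt_max_of_lt_left hR
  have hMγ : 0 ≤ 2 ^ |γ| * M ^ γ := by positivity
  by_cases hnear : dist z w ≤ 2 * R
  · have hsub : ball z R ⊆ ball w (3 * R) := fun x hx => by
      rw [mem_ball] at hx ⊢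
      linarith [dist_triangle x z w]
    have hRM : R ^ γ ≤ 2 ^ |γ| * M ^ γ :=
      rpow_le_two_rpow_abs_mul_rpow hR (by linarith [le_max_left R (dist z w)])
        (max_le (by linarith) hnear)
    calc ∫ x in ball z R, ‖x - w‖ ^ γ ∂μ
        ≤ ∫ x in ball w (3 * R), ‖x - w‖ ^ γ ∂μ :=
          setIntegral_mono_set (integrableOn_ball_norm_sub_rpow μ hγ w w _)
            (ae_of_all _ fun x => by positivity) hsub.eventuallyLE
      _ = K * 3 ^ (d + γ) * R ^ d * R ^ γ := by
          rw [setIntegral_ball_norm_sub_rpow μ hγ w (by positivity),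
            Real.mul_rpow (by norm_num) hR.le, Real.rpow_add hR, Real.rpow_natCast]
          ring
      _ ≤ K * 3 ^ (d + γ) * R ^ d * (2 ^ |γ| * M ^ γ) := by gcongr
      _ ≤ 2 ^ |γ| * (B + K * 3 ^ (d + γ)) * R ^ d * M ^ γ := by
          have : 0 ≤ B * R ^ d * (2 ^ |γ| * M ^ γ) := by positivity
          linarith
  · have hMd : M = dist z w := max_eq_right (by linarith)
    have hpt : ∀ x ∈ ball z R, ‖‖x - w‖ ^ γ‖ ≤ 2 ^ |γ| * M ^ γ := fun x hx => by
      have h1 := dist_triangle x z w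
      have h2 := dist_triangle_left z w x
      rw [mem_ball] at hx
      rw [Real.norm_of_nonneg (by positivity), ← dist_eq_norm]
      exact rpow_le_two_rpow_abs_mul_rpow (by linarith) (by linarith) (by linarith)
    calc ∫ x in ball z R, ‖x - w‖ ^ γ ∂μ
        ≤ 2 ^ |γ| * M ^ γ * μ.real (ball z R) :=
          (le_abs_self _).trans (norm_setIntegral_le_of_norm_le_const measure_ball_lt_top hpt)
      _ ≤ 2 ^ |γ| * (B + K * 3 ^ (d + γ)) * R ^ d * M ^ γ := by
          have : 0 ≤ K * 3 ^ (d + γ) * R ^ d * (2 ^ |γ| * M ^ γ) := by positivity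
          rw [addHaar_real_ball μ z hR.le, ← hd]
          linarith

end PowerWeight

open Real

theorem exists_average_ball_inter_upperHalf_norm_sub_rpow_le {γ : ℝ} (hγ : -2 < γ) :
    ∃ C > 0, ∀ (w : ℂ) (x R : ℝ), 0 < R →
      1 / (π * R ^ 2) * ∫ z in ball (x : ℂ) R ∩ upperHalf, ‖z - w‖ ^ γ ≤
        C * max R (dist (x : ℂ) w) ^ γ := by
  have hγ' : -(finrank ℝ ℂ : ℝ) < γ := by rwa [Complex.finrank_real_complex, Nat.cast_ofNat]
  obtain ⟨C, hC, hball⟩ := exists_setIntegral_ball_norm_sub_rpow_le volume hγ'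
  refine ⟨C / π, by positivity, fun w x R hR => ?_⟩
  calc 1 / (π * R ^ 2) * ∫ z in ball (x : ℂ) R ∩ upperHalf, ‖z - w‖ ^ γ
      ≤ 1 / (π * R ^ 2) * ∫ z in ball (x : ℂ) R, ‖z - w‖ ^ γ := by
        gcongr
        · exact ae_of_all _ fun z => by positivity
        · exact integrableOn_ball_norm_sub_rpow volume hγ' w _ _
        · exact inter_subset_left
      _ ≤ 1 / (π * R ^ 2) * (C * R ^ 2 * max R (dist (x : ℂ) w) ^ γ) := by
        gcongr
        simpa [Complex.finrank_real_complex] using hball w x R hR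
      _ = C / π * max R (dist (x : ℂ) w) ^ γ := by
        field_simp

theorem ND_norm_sub_rpow_le {p γ : ℝ} (hp : 1 < p) (hγ : -2 < γ) (hγp : γ < 2 * (p - 1)) :
    ∃ C > 0, ∀ (w : ℂ) (x R : ℝ), 0 < R → ND p (fun z => ‖z - w‖ ^ γ) x R ≤ C := by
  have hp1 : 0 < p - 1 := by linarith
  obtain ⟨C₁, hC₁, h₁⟩ := exists_average_ball_inter_upperHalf_norm_sub_rpow_le hγ
  obtain ⟨C₂, hC₂, h₂⟩ := exists_average_ball_inter_upperHalf_norm_sub_rpow_le (γ := -γ / (p - 1))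
    (by rw [lt_div_iff₀ hp1]; linarith)
  refine ⟨C₁ * C₂ ^ (p - 1), by positivity, fun w x R hR => ?_⟩
  have hdual : ∀ z : ℂ, (‖z - w‖ ^ γ) ^ (-(p / (p - 1) / p)) = ‖z - w‖ ^ (-γ / (p - 1)) :=
    fun z => by
      rw [← Real.rpow_mul (norm_nonneg _)]
      congr 1
      field_simp
  have hexp : p / (p / (p - 1)) = p - 1 := by field_simp
  set M := max R (dist (x : ℂ) w)
  have hM : 0 < M := lt_max_of_lt_left hR
  simp only [ND, hdual, hexp]
  calc _ ≤ C₁ * M ^ γ * (C₂ * M ^ (-γ / (p - 1))) ^ (p - 1) :=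
        mul_le_mul (h₁ w x R hR) (Real.rpow_le_rpow (by positivity) (h₂ w x R hR) hp1.le)
          (by positivity) (by positivity)
    _ = C₁ * C₂ ^ (p - 1) := by
        rw [Real.mul_rpow hC₂.le (by positivity), ← Real.rpow_mul hM.le,
          div_mul_cancel₀ _ hp1.ne', Real.rpow_neg hM.le]
        field_simp

/-- Let θ ∈ (0,1), α > 0, 1 < p < ∞, and consider the weight
μ(z) = |z-w|^{α(2-p)/θ}.  If p ∈ ((2α+2θ)/(α+2θ), (2α+2θ)/α), then
μ ∈ A_p^+(𝕌) with a bound N_D(μ) ≤ C independent of w and of the disk D. -/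
theorem weight_mu1_in_Ap_plus (θ α p : ℝ) (hθ : θ ∈ Set.Ioo (0 : ℝ) 1)
    (hα : 0 < α) (hp1 : 1 < p)
    (hp : p ∈ Set.Ioo ((2 * α + 2 * θ) / (α + 2 * θ)) ((2 * α + 2 * θ) / α)) :
    ∃ C > 0, ∀ w : ℂ, ∀ x R : ℝ, 0 < R →
      ND p (fun z => ‖z - w‖ ^ (α * (2 - p) / θ)) x R ≤ C := by
  obtain ⟨hθ0, -⟩ := hθ
  obtain ⟨hp_lo, hp_hi⟩ := hp
  rw [div_lt_iff₀ (by positivity)] at hp_lo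
  rw [lt_div_iff₀ hα] at hp_hi
  refine ND_norm_sub_rpow_le hp1 ?_ ?_
  · rw [lt_div_iff₀ hθ0]; linarith
  · rw [div_lt_iff₀ hθ0]; linarith
end

section
/- Let D = D(x,R) be a disk with x real, w ∈ ℂ with |x - w| ≥ 10R, and μ(z) = |z - w|^s for some real exponent s. Then N_D(μ) ≤ (1/2)^{(p+q)/q} · (11/9)^{|s|}, a bound independent of w, x, R. -/
/-!
On `D = ball x R` the distance `‖z - w‖` stays within `R` of `L = ‖x - w‖ ≥ 10 R`, so the weight
`μ = ‖· - w‖ ^ s` varies on `D` by a factor at most `((L + R) / (L - R)) ^ |s| ≤ (11 / 9) ^ |s|`.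
Each factor of `N_D` is an integral over `D ∩ 𝕌`, which has half the area of `D`, normalised by the
area of `D`; bounding the integrands by their suprema gives `N_D(μ) ≤ (1/2) ^ p · sup μ / inf μ`,
and `(p + q) / q = p`.
-/

open MeasureTheory Metric

lemma measurableSet_ball_inter_upperHalf (c : ℂ) (R : ℝ) :
    MeasurableSet (ball c R ∩ upperHalf) :=
  measurableSet_ball.inter (measurableSet_lt measurable_const Complex.measurable_im)

lemma two_mul_volume_ball_inter_upperHalf_le (x R : ℝ) :
    2 * volume (ball (x : ℂ) R ∩ upperHalf) ≤ volume (ball (x : ℂ) R) := by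
  set E := ball (x : ℂ) R ∩ upperHalf
  have hE : MeasurableSet E := measurableSet_ball_inter_upperHalf _ _
  have hconj : volume (Complex.conjLIE ⁻¹' E) = volume E :=
    Complex.conjLIE.measurePreserving.measure_preimage hE.nullMeasurableSet
  have hsub : Complex.conjLIE ⁻¹' E ⊆ ball (x : ℂ) R := fun z ⟨hz, _⟩ => by
    rwa [mem_ball, ← Complex.dist_conj_conj, Complex.conj_ofReal]
  have hdisj : Disjoint E (Complex.conjLIE ⁻¹' E) :=
    Set.disjoint_left.mpr fun z ⟨_, hz⟩ ⟨_, hz'⟩ => by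
      simp only [upperHalf, Set.mem_ofPred_eq, Complex.conjLIE_apply, Complex.conj_im] at hz hz'
      linarith
  calc 2 * volume E = volume (E ∪ Complex.conjLIE ⁻¹' E) := by
        rw [measure_union hdisj (hE.preimage Complex.conjLIE.continuous.measurable), hconj, two_mul]
    _ ≤ volume (ball (x : ℂ) R) := measure_mono (Set.union_subset Set.inter_subset_left hsub)

lemma measureReal_ball_inter_upperHalf_le (x : ℝ) {R : ℝ} (hR : 0 ≤ R) :
    volume.real (ball (x : ℂ) R ∩ upperHalf) ≤ Real.pi * R ^ 2 / 2 := by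
  have hball : volume.real (ball (x : ℂ) R) = Real.pi * R ^ 2 := by
    simp [measureReal_def, ENNReal.toReal_ofReal hR, mul_comm]
  have h := ENNReal.toReal_mono (measure_ball_lt_top (x := (x : ℂ)) (r := R)).ne
    (two_mul_volume_ball_inter_upperHalf_le x R)
  rw [ENNReal.toReal_mul, ← measureReal_def, ← measureReal_def, hball] at h
  norm_num at h
  linarith

/-- The mean over `D = ball x R` of `f` extended by zero off `𝕌`. -/
noncomputable def diskAverage (f : ℂ → ℝ) (x R : ℝ) : ℝ :=
  (1 / (Real.pi * R ^ 2)) * ∫ z in ball (x : ℂ) R ∩ upperHalf, f z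

lemma diskAverage_nonneg {f : ℂ → ℝ} {x R : ℝ}
    (hf : ∀ z ∈ ball (x : ℂ) R ∩ upperHalf, 0 ≤ f z) : 0 ≤ diskAverage f x R :=
  mul_nonneg (by positivity) (setIntegral_nonneg (measurableSet_ball_inter_upperHalf _ _) hf)

lemma diskAverage_le {f : ℂ → ℝ} {x R B : ℝ} (hR : 0 < R) (hB : 0 ≤ B)
    (hf : ∀ z ∈ ball (x : ℂ) R ∩ upperHalf, ‖f z‖ ≤ B) : diskAverage f x R ≤ B / 2 := by
  have hfin : volume (ball (x : ℂ) R ∩ upperHalf) < ⊤ :=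
    (measure_mono Set.inter_subset_left).trans_lt measure_ball_lt_top
  have hint : ∫ z in ball (x : ℂ) R ∩ upperHalf, f z ≤ B * (Real.pi * R ^ 2 / 2) :=
    calc _ ≤ ‖∫ z in ball (x : ℂ) R ∩ upperHalf, f z‖ := le_abs_self _
      _ ≤ B * volume.real (ball (x : ℂ) R ∩ upperHalf) :=
        norm_setIntegral_le_of_norm_le_const hfin hf
      _ ≤ B * (Real.pi * R ^ 2 / 2) := by gcongr; exact measureReal_ball_inter_upperHalf_le x hR.le
  calc diskAverage f x R ≤ (1 / (Real.pi * R ^ 2)) * (B * (Real.pi * R ^ 2 / 2)) := by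
        unfold diskAverage; gcongr
    _ = B / 2 := by field_simp

lemma ND_eq {p : ℝ} (hp₀ : p ≠ 0) (hp₁ : p ≠ 1) (μ : ℂ → ℝ) (x R : ℝ) :
    ND p μ x R = diskAverage μ x R * diskAverage (fun z => μ z ^ (-(p - 1)⁻¹)) x R ^ (p - 1) := by
  have hp₁' : p - 1 ≠ 0 := sub_ne_zero.mpr hp₁
  have hexp : (p / (p - 1)) / p = (p - 1)⁻¹ := by field_simp
  have hpow : p / (p / (p - 1)) = p - 1 := by field_simp
  rw [ND, hexp, hpow, diskAverage, diskAverage]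

lemma ND_le_of_forall_mem_Icc {p x R m M : ℝ} {μ : ℂ → ℝ} (hp : 1 < p) (hR : 0 < R)
    (hm : 0 < m) (hmM : m ≤ M) (hμ : ∀ z ∈ ball (x : ℂ) R ∩ upperHalf, μ z ∈ Set.Icc m M) :
    ND p μ x R ≤ (1 / 2) ^ p * (M / m) := by
  have ht : 0 ≤ (p - 1)⁻¹ := inv_nonneg.mpr (sub_nonneg.mpr hp.le)
  have hμpos : ∀ z ∈ ball (x : ℂ) R ∩ upperHalf, 0 < μ z := fun z hz => hm.trans_le (hμ z hz).1
  have hA : diskAverage μ x R ≤ M / 2 := diskAverage_le hR (hm.le.trans hmM) fun z hz => by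
    rw [Real.norm_of_nonneg (hμpos z hz).le]; exact (hμ z hz).2
  have hB : diskAverage (fun z => μ z ^ (-(p - 1)⁻¹)) x R ≤ m ^ (-(p - 1)⁻¹) / 2 :=
    diskAverage_le hR (by positivity) fun z hz => by
      rw [Real.norm_of_nonneg (Real.rpow_nonneg (hμpos z hz).le _)]
      exact Real.rpow_le_rpow_of_nonpos hm (hμ z hz).1 (neg_nonpos.mpr ht)
  have hB₀ : 0 ≤ diskAverage (fun z => μ z ^ (-(p - 1)⁻¹)) x R :=
    diskAverage_nonneg fun z hz => Real.rpow_nonneg (hμpos z hz).le _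
  calc ND p μ x R
      = diskAverage μ x R * diskAverage (fun z => μ z ^ (-(p - 1)⁻¹)) x R ^ (p - 1) :=
        ND_eq (by linarith) hp.ne' μ x R
    _ ≤ M / 2 * (m ^ (-(p - 1)⁻¹) / 2) ^ (p - 1) := by gcongr; linarith
    _ = (1 / 2) ^ p * (M / m) := by
        have hp₁ : p - 1 ≠ 0 := by linarith
        rw [Real.div_rpow (by positivity) zero_le_two, ← Real.rpow_mul hm.le,
          show -(p - 1)⁻¹ * (p - 1) = -1 by field_simp, Real.rpow_neg_one,
          Real.div_rpow zero_le_one zero_le_two, Real.one_rpow,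
          Real.rpow_sub_one two_ne_zero]
        field_simp

lemma norm_sub_mem_Icc_of_mem_ball {E : Type*} [SeminormedAddCommGroup E] {c z w : E} {R : ℝ}
    (hz : z ∈ ball c R) : ‖z - w‖ ∈ Set.Icc (‖c - w‖ - R) (‖c - w‖ + R) := by
  have h := abs_norm_sub_norm_le (z - w) (c - w)
  rw [sub_sub_sub_cancel_right] at h
  have := abs_le.mp (h.trans (mem_ball_iff_norm.mp hz).le)
  constructor <;> linarith

lemma exists_rpow_mem_Icc_of_mem_Icc {a b : ℝ} (ha : 0 < a) (hab : a ≤ b) (s : ℝ) :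
    ∃ m M : ℝ, 0 < m ∧ M / m = (b / a) ^ |s| ∧ ∀ y ∈ Set.Icc a b, y ^ s ∈ Set.Icc m M := by
  have hb : 0 < b := ha.trans_le hab
  rcases le_or_gt 0 s with hs | hs
  · refine ⟨a ^ s, b ^ s, by positivity, by rw [abs_of_nonneg hs, Real.div_rpow hb.le ha.le],
      fun y ⟨hay, hyb⟩ => ⟨?_, ?_⟩⟩
    · exact Real.rpow_le_rpow ha.le hay hs
    · exact Real.rpow_le_rpow (ha.le.trans hay) hyb hs
  · refine ⟨b ^ s, a ^ s, by positivity, ?_, fun y ⟨hay, hyb⟩ => ⟨?_, ?_⟩⟩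
    · rw [abs_of_neg hs, Real.rpow_neg (by positivity), Real.div_rpow hb.le ha.le, inv_div]
    · exact Real.rpow_le_rpow_of_nonpos (ha.trans_le hay) hyb hs.le
    · exact Real.rpow_le_rpow_of_nonpos ha hay hs.le

/-- For the disk D = D(x,R) with x real and w ∈ ℂ with |x-w| ≥ 10R, the weight
μ(z) = |z-w|^s satisfies N_D(μ) ≤ (1/2)^{(p+q)/q} (11/9)^{|s|}, a bound
independent of w, x, R.  Here q = p/(p-1) is the conjugate exponent of p. -/
theorem ND_far_disk_bound (p q s x R : ℝ) (w : ℂ) (hp : 1 < p)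
    (hq : q = p / (p - 1)) (hR : 0 < R)
    (hfar : 10 * R ≤ ‖(x : ℂ) - w‖) :
    ND p (fun z => ‖z - w‖ ^ s) x R ≤
      (1 / 2 : ℝ) ^ ((p + q) / q) * (11 / 9 : ℝ) ^ |s| := by
  set L := ‖(x : ℂ) - w‖
  have hLR : 0 < L - R := by linarith
  obtain ⟨m, M, hm, hMm, hbounds⟩ := exists_rpow_mem_Icc_of_mem_Icc (b := L + R) hLR (by linarith) s
  have hμ : ∀ z ∈ ball (x : ℂ) R ∩ upperHalf, ‖z - w‖ ^ s ∈ Set.Icc m M :=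
    fun z hz => hbounds _ (norm_sub_mem_Icc_of_mem_ball hz.1)
  have hmM : m ≤ M := Set.nonempty_Icc.mp ⟨_, hbounds _ (Set.left_mem_Icc.mpr (by linarith))⟩
  have hpq : (p + q) / q = p := by
    have : p - 1 ≠ 0 := by linarith
    rw [hq]; field_simp; ring
  have hratio : (L + R) / (L - R) ≤ 11 / 9 := by
    rw [div_le_div_iff₀ hLR (by norm_num)]; linarith
  calc ND p (fun z => ‖z - w‖ ^ s) x R ≤ (1 / 2) ^ p * (M / m) :=
        ND_le_of_forall_mem_Icc hp hR hm hmM hμ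
    _ ≤ (1 / 2) ^ ((p + q) / q) * (11 / 9) ^ |s| := by
        rw [hpq, hMm]
        gcongr
end

section
/- The power series identity Σ_{j,k≥0} (j+1)(k+1) xʲ yᵏ = 1/((1−x)²(1−y)²) holds for |x| < 1, |y| < 1, and consequently the Bergman kernel of the weighted symmetric Bergman space A²(𝔻², ν) ∩ 𝕀^τ(𝔻²) with ν(z) = |z₁−z₂|² is B_ν(z,ζ) = (1/(2π²)) · (1/((z₁−z₂)(ζ̄₁−ζ̄₂))) · [1/((1−z₁ζ̄₁)²(1−z₂ζ̄₂)²) − 1/((1−z₁ζ̄₂)²(1−z₂ζ̄₁)²)]. -/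
/-!
The first identity is the Cauchy product of two copies of `∑ (n + 1) xⁿ = 1 / (1 - x)²`.
For the kernel put `w = ζ̄`. Expanding `(z₁ʲz₂ᵏ - z₁ᵏz₂ʲ)(w₁ʲw₂ᵏ - w₁ᵏw₂ʲ)` shows that
`e_{j,k}(z) · conj (e_{j,k}(ζ))` is `1 / (2π² (z₁ - z₂)(w₁ - w₂))` times the sum of the `(j, k)` and
`(k, j)` terms of the double series `∑ (j + 1)(k + 1) [(z₁w₁)ʲ(z₂w₂)ᵏ - (z₁w₂)ʲ(z₂w₁)ᵏ]`, whose
diagonal terms vanish. So the sum over `j > k` is the whole double series, which is a difference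
of two instances of the first identity.
-/

open MeasureTheory Metric

/-- The unit bidisk 𝔻² ⊆ ℂ². -/
def biDisk : Set (ℂ × ℂ) := (ball (0 : ℂ) 1) ×ˢ (ball (0 : ℂ) 1)

/-- The orthonormal basis element e_{j,k} of A²(𝔻²,ν) ∩ 𝕀^τ(𝔻²), j > k. -/
noncomputable def basisElt (j k : ℕ) (z : ℂ × ℂ) : ℂ :=
  (Real.sqrt (((k + 1) * (j + 1)) / (2 * Real.pi ^ 2)) : ℂ) *
    (z.1 ^ j * z.2 ^ k - z.1 ^ k * z.2 ^ j) / (z.1 - z.2)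

open Asymptotics Filter ComplexConjugate

theorem hasSum_succ_mul_geometric_of_norm_lt_one {𝕜 : Type*} [NormedDivisionRing 𝕜]
    {x : 𝕜} (hx : ‖x‖ < 1) :
    HasSum (fun n : ℕ => ((n : 𝕜) + 1) * x ^ n) (1 / (1 - x) ^ 2) := by
  simpa using hasSum_choose_mul_geometric_of_norm_lt_one 1 hx

theorem summable_norm_succ_mul_geometric_of_norm_lt_one {R : Type*} [NormedRing R]
    {x : R} (hx : ‖x‖ < 1) :
    Summable fun n : ℕ => ‖((n : R) + 1) * x ^ n‖ := by
  have hu : (fun n : ℕ => ((n + 1 : ℕ) : ℝ)) =O[atTop] fun n => ((n ^ 1 : ℕ) : ℝ) := by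
    refine isBigO_iff.2 ⟨2, eventually_atTop.2 ⟨1, fun n hn => ?_⟩⟩
    simp only [Nat.cast_add, Nat.cast_one, pow_one, Real.norm_eq_abs]
    rw [abs_of_nonneg (by positivity), abs_of_nonneg (by positivity)]
    have : (1 : ℝ) ≤ n := by exact_mod_cast hn
    linarith
  simpa using summable_norm_mul_geometric_of_norm_lt_one hx hu

theorem hasSum_succ_mul_succ_mul_geometric_of_norm_lt_one {𝕜 : Type*} [NormedField 𝕜]
    [CompleteSpace 𝕜] {x y : 𝕜} (hx : ‖x‖ < 1) (hy : ‖y‖ < 1) :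
    HasSum (fun jk : ℕ × ℕ => ((jk.1 + 1) * (jk.2 + 1) : 𝕜) * x ^ jk.1 * y ^ jk.2)
      (1 / ((1 - x) ^ 2 * (1 - y) ^ 2)) := by
  have hs := summable_mul_of_summable_norm (summable_norm_succ_mul_geometric_of_norm_lt_one hx)
      (summable_norm_succ_mul_geometric_of_norm_lt_one hy)
  have h := (hasSum_succ_mul_geometric_of_norm_lt_one hx).mul
    (hasSum_succ_mul_geometric_of_norm_lt_one hy) hs
  rw [div_mul_div_comm, one_mul] at h
  exact h.congr_fun fun jk => by ring

theorem HasSum.sum_add_swap_of_lt {ι α : Type*} [LinearOrder ι] [AddCommMonoid α]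
    [TopologicalSpace α] [ContinuousAdd α] [RegularSpace α] {f : ι × ι → α} {a : α}
    (hf : HasSum f a) (hdiag : ∀ i, f (i, i) = 0) :
    HasSum (fun q : {q : ι × ι // q.2 < q.1} => f q + f q.1.swap) a := by
  -- `{q | q.2 < q.1} × Bool` injects onto the off-diagonal, which contains the support of `f`.
  let g : {q : ι × ι // q.2 < q.1} × Bool → ι × ι := fun p => cond p.2 p.1.1.swap p.1.1
  have hg : Function.Injective g := by
    rintro ⟨⟨p, hp⟩, _ | _⟩ ⟨⟨q, hq⟩, _ | _⟩ h <;> simp_all [g, Prod.ext_iff] <;> grind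
  have hrange : ∀ q, q ∉ Set.range g → f q = 0 := by
    rintro ⟨i, j⟩ hq
    rcases lt_trichotomy i j with h | rfl | h
    · exact absurd ⟨(⟨(j, i), h⟩, true), rfl⟩ hq
    · exact hdiag i
    · exact absurd ⟨(⟨(i, j), h⟩, false), rfl⟩ hq
  refine ((hg.hasSum_iff hrange).2 hf).prod_fiberwise fun q => ?_
  simpa [g, add_comm] using hasSum_fintype (fun b : Bool => f (g (q, b)))

noncomputable def kernelSummand (z w : ℂ × ℂ) (jk : ℕ × ℕ) : ℂ :=
  ((jk.1 + 1) * (jk.2 + 1) : ℂ) * (z.1 * w.1) ^ jk.1 * (z.2 * w.2) ^ jk.2 -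
    ((jk.1 + 1) * (jk.2 + 1) : ℂ) * (z.1 * w.2) ^ jk.1 * (z.2 * w.1) ^ jk.2

lemma kernelSummand_diag (z w : ℂ × ℂ) (n : ℕ) : kernelSummand z w (n, n) = 0 := by
  simp only [kernelSummand]
  ring

lemma conj_basisElt (j k : ℕ) (ζ : ℂ × ℂ) :
    conj (basisElt j k ζ) = basisElt j k (Prod.map conj conj ζ) := by
  simp [basisElt, Complex.conj_ofReal]

lemma basisElt_mul_basisElt (j k : ℕ) (z w : ℂ × ℂ) :
    basisElt j k z * basisElt j k w =
      1 / ((2 * Real.pi ^ 2 : ℝ) : ℂ) * (1 / ((z.1 - z.2) * (w.1 - w.2))) *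
        (kernelSummand z w (j, k) + kernelSummand z w (k, j)) := by
  set s : ℂ := ((Real.sqrt (((k + 1) * (j + 1)) / (2 * Real.pi ^ 2)) : ℝ) : ℂ)
  have hs : s * s = ((k + 1) * (j + 1) / (2 * Real.pi ^ 2) : ℝ) := by
    rw [← Complex.ofReal_mul, Real.mul_self_sqrt (by positivity)]
  calc basisElt j k z * basisElt j k w
      = s * s * (1 / (z.1 - z.2) * (1 / (w.1 - w.2))) *
          ((z.1 ^ j * z.2 ^ k - z.1 ^ k * z.2 ^ j) * (w.1 ^ j * w.2 ^ k - w.1 ^ k * w.2 ^ j)) := by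
        simp only [basisElt, s]; ring
    _ = _ := by
        rw [one_div_mul_one_div, hs]; simp only [kernelSummand]; push_cast; ring

lemma prodMap_conj_mem_biDisk {ζ : ℂ × ℂ} (hζ : ζ ∈ biDisk) : Prod.map conj conj ζ ∈ biDisk := by
  simpa [biDisk] using hζ

lemma hasSum_kernelSummand {z w : ℂ × ℂ} (hz : z ∈ biDisk) (hw : w ∈ biDisk) :
    HasSum (kernelSummand z w)
      (1 / ((1 - z.1 * w.1) ^ 2 * (1 - z.2 * w.2) ^ 2) -
        1 / ((1 - z.1 * w.2) ^ 2 * (1 - z.2 * w.1) ^ 2)) := by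
  simp only [biDisk, Set.mem_prod, mem_ball_zero_iff] at hz hw
  have norm_mul_lt {a b : ℂ} (ha : ‖a‖ < 1) (hb : ‖b‖ < 1) : ‖a * b‖ < 1 := by
    rw [norm_mul]; exact mul_lt_one_of_nonneg_of_lt_one_left (norm_nonneg a) ha hb.le
  exact (hasSum_succ_mul_succ_mul_geometric_of_norm_lt_one (norm_mul_lt hz.1 hw.1)
    (norm_mul_lt hz.2 hw.2)).sub
    (hasSum_succ_mul_succ_mul_geometric_of_norm_lt_one (norm_mul_lt hz.1 hw.2)
      (norm_mul_lt hz.2 hw.1))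

/-- The power series identity Σ_{j,k≥0} (j+1)(k+1) xʲyᵏ = 1/((1−x)²(1−y)²) for
|x|,|y| < 1, and the resulting closed formula for the Bergman kernel of the
weighted symmetric Bergman space A²(𝔻²,ν) ∩ 𝕀^τ(𝔻²), ν = |z₁−z₂|², obtained by
summing e_{j,k}(z)·conj(e_{j,k}(ζ)) over the orthonormal basis. -/
theorem kernel_series_identity :
    (∀ x y : ℂ, ‖x‖ < 1 → ‖y‖ < 1 →
      HasSum
        (fun jk : ℕ × ℕ =>
          ((jk.1 + 1) * (jk.2 + 1) : ℂ) * x ^ jk.1 * y ^ jk.2)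
        (1 / ((1 - x) ^ 2 * (1 - y) ^ 2))) ∧
    (∀ z ∈ biDisk, ∀ ζ ∈ biDisk, z.1 ≠ z.2 → ζ.1 ≠ ζ.2 →
      HasSum
        (fun jk : {q : ℕ × ℕ // q.2 < q.1} =>
          basisElt jk.1.1 jk.1.2 z * (starRingEnd ℂ) (basisElt jk.1.1 jk.1.2 ζ))
        (((1 : ℂ) / ((2 * Real.pi ^ 2 : ℝ) : ℂ)) *
          (1 / ((z.1 - z.2) * (starRingEnd ℂ) (ζ.1 - ζ.2))) *
          (1 / ((1 - z.1 * (starRingEnd ℂ) ζ.1) ^ 2 *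
                (1 - z.2 * (starRingEnd ℂ) ζ.2) ^ 2) -
           1 / ((1 - z.1 * (starRingEnd ℂ) ζ.2) ^ 2 *
                (1 - z.2 * (starRingEnd ℂ) ζ.1) ^ 2)))) := by
  refine ⟨fun x y hx hy => hasSum_succ_mul_succ_mul_geometric_of_norm_lt_one hx hy, ?_⟩
  intro z hz ζ hζ _ _
  set w := Prod.map conj conj ζ
  have h := ((hasSum_kernelSummand hz (prodMap_conj_mem_biDisk hζ)).sum_add_swap_of_lt
    (kernelSummand_diag z w)).mul_left
      (1 / ((2 * Real.pi ^ 2 : ℝ) : ℂ) * (1 / ((z.1 - z.2) * (w.1 - w.2))))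
  rw [map_sub]
  exact h.congr_fun fun q => by rw [conj_basisElt, basisElt_mul_basisElt]; rfl
end

section
/- For m, n positive integers with gcd(m,n) = 1 and γ = m/n, the map Φ(w₁,w₂) = (w₁w₂ⁿ, w₂ᵐ) is a proper surjective holomorphic map from 𝔻 × 𝔻* onto the generalized Hartogs triangle ℍ^γ = {(z₁,z₂) ∈ ℂ² : |z₁|^γ < |z₂| < 1}. -/
open MeasureTheory Metric

/-- 𝔻 × 𝔻*, the product of the unit disk and the punctured unit disk. -/
def diskTimesPuncturedDisk : Set (ℂ × ℂ) :=
  {w | ‖w.1‖ < 1 ∧ 0 < ‖w.2‖ ∧ ‖w.2‖ < 1}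

/-- The generalized Hartogs triangle ℍ^γ = {|z₁|^γ < |z₂| < 1}. -/
def hartogsTriangle (γ : ℝ) : Set (ℂ × ℂ) :=
  {z | ‖z.1‖ ^ γ < ‖z.2‖ ∧ ‖z.2‖ < 1}

/-! For `z = Φ(w₁, w₂) = (w₁ w₂ⁿ, w₂ᵐ)` one has `|z₁|ᵐ = |w₁|ᵐ |z₂|ⁿ`, so the Hartogs condition
`|z₁|^(m/n) < |z₂|`, i.e. `|z₁|ᵐ < |z₂|ⁿ`, says exactly `|w₁| < 1`. A preimage of `z` is obtained
from an `m`-th root `u` of `z₂` as `(z₁ / uⁿ, u)`. For properness, a compact `K ⊆ ℍ^(m/n)` keeps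
`|z₂|ⁿ - |z₁|ᵐ`, `|z₂|` and `1 - |z₂|` above some `δ > 0`, which confines its preimage to a closed
subset of `𝔻 × 𝔻*` bounded away from the boundary. -/

lemma Real.rpow_natCast_div_lt_iff {x y : ℝ} (hx : 0 ≤ x) (hy : 0 ≤ y) (m : ℕ) {n : ℕ}
    (hn : n ≠ 0) : x ^ ((m : ℝ) / n) < y ↔ x ^ m < y ^ n := by
  rw [← pow_lt_pow_iff_left₀ (Real.rpow_nonneg hx _) hy hn, ← Real.rpow_natCast _ n,
    ← Real.rpow_mul hx, div_mul_cancel₀ _ (Nat.cast_ne_zero.2 hn), Real.rpow_natCast]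

lemma mem_hartogsTriangle_div_iff {m n : ℕ} (hn : n ≠ 0) {z : ℂ × ℂ} :
    z ∈ hartogsTriangle ((m : ℝ) / n) ↔ ‖z.1‖ ^ m < ‖z.2‖ ^ n ∧ ‖z.2‖ < 1 := by
  rw [hartogsTriangle, Set.mem_ofPred_eq,
    Real.rpow_natCast_div_lt_iff (norm_nonneg _) (norm_nonneg _) m hn]

lemma isBounded_diskTimesPuncturedDisk : Bornology.IsBounded diskTimesPuncturedDisk :=
  isBounded_closedBall.subset fun _ hw =>
    mem_closedBall_zero_iff.2 (norm_prod_le_iff.2 ⟨hw.1.le, hw.2.2.le⟩)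

lemma mem_diskTimesPuncturedDisk_of_pow {m : ℕ} (hm : m ≠ 0) {w : ℂ × ℂ}
    (h₁ : ‖w.1‖ ^ m < 1) (h₂ : 0 < ‖w.2‖ ^ m) (h₃ : ‖w.2‖ ^ m < 1) :
    w ∈ diskTimesPuncturedDisk :=
  ⟨(pow_lt_one_iff_of_nonneg (norm_nonneg _) hm).1 h₁,
    lt_of_pow_lt_pow_left₀ m (norm_nonneg _) (by rwa [zero_pow hm]),
    (pow_lt_one_iff_of_nonneg (norm_nonneg _) hm).1 h₃⟩

lemma exists_margin_of_isCompact_subset_hartogsTriangle {m n : ℕ} (hn : n ≠ 0)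
    {K : Set (ℂ × ℂ)} (hK : IsCompact K) (hKH : K ⊆ hartogsTriangle ((m : ℝ) / n)) :
    ∃ δ > 0, ∀ z ∈ K, ‖z.1‖ ^ m + δ ≤ ‖z.2‖ ^ n ∧ δ ≤ ‖z.2‖ ∧ ‖z.2‖ + δ ≤ 1 := by
  have hcont : Continuous fun z : ℂ × ℂ =>
      min (‖z.2‖ ^ n - ‖z.1‖ ^ m) (min ‖z.2‖ (1 - ‖z.2‖)) := by fun_prop
  have hpos : ∀ z ∈ K, 0 < min (‖z.2‖ ^ n - ‖z.1‖ ^ m) (min ‖z.2‖ (1 - ‖z.2‖)) := by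
    intro z hz
    obtain ⟨hlt, h₁⟩ := (mem_hartogsTriangle_div_iff hn).1 (hKH hz)
    have h₀ : 0 < ‖z.2‖ := lt_of_le_of_lt (Real.rpow_nonneg (norm_nonneg _) _) (hKH hz).1
    exact lt_min (sub_pos.2 hlt) (lt_min h₀ (sub_pos.2 h₁))
  obtain ⟨δ, hδ, hle⟩ := hK.exists_forall_le' hcont.continuousOn hpos
  refine ⟨δ, hδ, fun z hz => ?_⟩
  obtain ⟨hgap, hlow, hhigh⟩ : δ ≤ ‖z.2‖ ^ n - ‖z.1‖ ^ m ∧ δ ≤ ‖z.2‖ ∧ δ ≤ 1 - ‖z.2‖ := by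
    simpa only [le_min_iff] using hle z hz
  exact ⟨by linarith, hlow, by linarith⟩

lemma isCompact_preimage_inter_of_subset_isClosed {X Y : Type*} [PseudoMetricSpace X]
    [ProperSpace X] [TopologicalSpace Y] {f : X → Y} (hf : Continuous f) {K : Set Y}
    (hK : IsClosed K) {C D : Set X} (hD : Bornology.IsBounded D) (hC : IsClosed C)
    (hCD : C ⊆ D) (hKC : f ⁻¹' K ∩ D ⊆ C) : IsCompact (f ⁻¹' K ∩ D) := by
  have hKD : f ⁻¹' K ∩ D = f ⁻¹' K ∩ C :=
    subset_antisymm (fun x hx => ⟨hx.1, hKC hx⟩) (Set.inter_subset_inter_right _ hCD)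
  rw [hKD]
  exact isCompact_of_isClosed_isBounded ((hK.preimage hf).inter hC)
    (hD.subset (Set.inter_subset_right.trans hCD))

def hartogsCover (m n : ℕ) (w : ℂ × ℂ) : ℂ × ℂ := (w.1 * w.2 ^ n, w.2 ^ m)

namespace hartogsCover

variable {m n : ℕ}

lemma differentiable : Differentiable ℂ (hartogsCover m n) :=
  (differentiable_fst.mul (differentiable_snd.pow n)).prodMk (differentiable_snd.pow m)

lemma norm_fst_pow (w : ℂ × ℂ) :
    ‖(hartogsCover m n w).1‖ ^ m = ‖w.1‖ ^ m * ‖(hartogsCover m n w).2‖ ^ n := by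
  simp only [hartogsCover, norm_mul, norm_pow]
  ring

lemma mapsTo (hm : m ≠ 0) (hn : n ≠ 0) :
    Set.MapsTo (hartogsCover m n) diskTimesPuncturedDisk
      (hartogsTriangle ((m : ℝ) / n)) := by
  rintro w ⟨h₁, h₂, h₃⟩
  have hpos : 0 < ‖(hartogsCover m n w).2‖ ^ n := by
    simp only [hartogsCover, norm_pow]
    positivity
  refine (mem_hartogsTriangle_div_iff hn).2 ⟨?_, ?_⟩
  · rw [norm_fst_pow]
    exact mul_lt_of_lt_one_left hpos (pow_lt_one₀ (norm_nonneg _) h₁ hm)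
  · simpa only [hartogsCover, norm_pow] using pow_lt_one₀ (norm_nonneg _) h₃ hm

lemma surjOn (hm : m ≠ 0) (hn : n ≠ 0) :
    Set.SurjOn (hartogsCover m n) diskTimesPuncturedDisk
      (hartogsTriangle ((m : ℝ) / n)) := by
  intro z hz
  obtain ⟨hlt, h₁⟩ := (mem_hartogsTriangle_div_iff hn).1 hz
  set u : ℂ := z.2 ^ ((m : ℂ)⁻¹)
  have hu : u ^ m = z.2 := Complex.cpow_nat_inv_pow z.2 hm
  have hnorm : ‖u‖ ^ m = ‖z.2‖ := by rw [← norm_pow, hu]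
  have hz₂ : 0 < ‖z.2‖ := lt_of_pow_lt_pow_left₀ n (norm_nonneg _)
    (by rw [zero_pow hn]; exact (pow_nonneg (norm_nonneg _) _).trans_lt hlt)
  have hun : u ^ n ≠ 0 := pow_ne_zero _ (ne_zero_pow hm (hu ▸ norm_pos_iff.1 hz₂))
  refine ⟨(z.1 / u ^ n, u),
    mem_diskTimesPuncturedDisk_of_pow hm ?_ (hnorm ▸ hz₂) (hnorm ▸ h₁), ?_⟩
  · rw [norm_div, norm_pow, div_pow, ← pow_mul, mul_comm n m, pow_mul, hnorm]
    exact (div_lt_one (pow_pos hz₂ n)).2 hlt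
  · simp [hartogsCover, div_mul_cancel₀ _ hun, hu]

lemma isCompact_preimage_inter (hm : m ≠ 0) (hn : n ≠ 0) {K : Set (ℂ × ℂ)}
    (hKH : K ⊆ hartogsTriangle ((m : ℝ) / n)) (hK : IsCompact K) :
    IsCompact (hartogsCover m n ⁻¹' K ∩ diskTimesPuncturedDisk) := by
  obtain ⟨δ, hδ, hmargin⟩ := exists_margin_of_isCompact_subset_hartogsTriangle hn hK hKH
  set C : Set (ℂ × ℂ) :=
    {w | ‖w.1‖ ^ m + δ ≤ 1 ∧ δ ≤ ‖w.2‖ ^ m ∧ ‖w.2‖ ^ m + δ ≤ 1}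
  have hC : IsClosed C := by
    simp only [C, Set.ofPred_and]
    refine (isClosed_le ?_ ?_).inter ((isClosed_le ?_ ?_).inter (isClosed_le ?_ ?_)) <;> fun_prop
  have hCD : C ⊆ diskTimesPuncturedDisk := fun w ⟨h₁, h₂, h₃⟩ =>
    mem_diskTimesPuncturedDisk_of_pow hm (by linarith) (by linarith) (by linarith)
  refine isCompact_preimage_inter_of_subset_isClosed differentiable.continuous hK.isClosed
    isBounded_diskTimesPuncturedDisk hC hCD ?_
  rintro w ⟨hwK, hwD⟩
  obtain ⟨h₁, h₂, h₃⟩ := hmargin _ hwK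
  have hz₂ : ‖(hartogsCover m n w).2‖ = ‖w.2‖ ^ m := norm_pow _ _
  -- `t = |z₂|ⁿ ∈ (0, 1]`, so `|w₁|ᵐ t + δ ≤ t` forces `|w₁|ᵐ + δ ≤ 1`.
  have ht₀ : 0 < ‖(hartogsCover m n w).2‖ ^ n := by rw [hz₂]; have := hwD.2.1; positivity
  have ht₁ : ‖(hartogsCover m n w).2‖ ^ n ≤ 1 := pow_le_one₀ (norm_nonneg _) (by linarith)
  rw [norm_fst_pow] at h₁
  refine ⟨?_, hz₂ ▸ h₂, hz₂ ▸ h₃⟩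
  nlinarith [pow_nonneg (norm_nonneg w.1) m]

end hartogsCover

theorem hartogs_covering_general (m n : ℕ) (hm : 0 < m) (hn : 0 < n) :
    Differentiable ℂ (fun w : ℂ × ℂ => (w.1 * w.2 ^ n, w.2 ^ m)) ∧
    Set.MapsTo (fun w : ℂ × ℂ => (w.1 * w.2 ^ n, w.2 ^ m))
      diskTimesPuncturedDisk (hartogsTriangle ((m : ℝ) / n)) ∧
    Set.SurjOn (fun w : ℂ × ℂ => (w.1 * w.2 ^ n, w.2 ^ m))
      diskTimesPuncturedDisk (hartogsTriangle ((m : ℝ) / n)) ∧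
    ∀ K ⊆ hartogsTriangle ((m : ℝ) / n), IsCompact K →
      IsCompact ((fun w : ℂ × ℂ => (w.1 * w.2 ^ n, w.2 ^ m)) ⁻¹' K ∩
        diskTimesPuncturedDisk) :=
  ⟨hartogsCover.differentiable, hartogsCover.mapsTo hm.ne' hn.ne',
    hartogsCover.surjOn hm.ne' hn.ne',
    fun _ hKH hK => hartogsCover.isCompact_preimage_inter hm.ne' hn.ne' hKH hK⟩

/-- For coprime positive integers m, n and γ = m/n, the map
Φ(w₁,w₂) = (w₁w₂ⁿ, w₂ᵐ) is a proper surjective holomorphic map from 𝔻 × 𝔻*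
onto ℍ^γ. -/
theorem hartogs_covering (m n : ℕ) (hm : 0 < m) (hn : 0 < n)
    (hco : Nat.Coprime m n) :
    Differentiable ℂ (fun w : ℂ × ℂ => (w.1 * w.2 ^ n, w.2 ^ m)) ∧
    Set.MapsTo (fun w : ℂ × ℂ => (w.1 * w.2 ^ n, w.2 ^ m))
      diskTimesPuncturedDisk (hartogsTriangle ((m : ℝ) / n)) ∧
    Set.SurjOn (fun w : ℂ × ℂ => (w.1 * w.2 ^ n, w.2 ^ m))
      diskTimesPuncturedDisk (hartogsTriangle ((m : ℝ) / n)) ∧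
    ∀ K ⊆ hartogsTriangle ((m : ℝ) / n), IsCompact K →
      IsCompact ((fun w : ℂ × ℂ => (w.1 * w.2 ^ n, w.2 ^ m)) ⁻¹' K ∩
        diskTimesPuncturedDisk) :=
  hartogs_covering_general m n hm hn
end
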